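/- With d > 0, corr(R_{t,t+H}, RV_{t−H,t}) → 2^{2d} − 1 as H → ∞, where R_{t,t+H} = Σ_{j=tm+1}^{(t+H)m} r_j and RV_{t−H,t} = Σ_{j=(t−H)m+1}^{tm} r_j², provided that cov(r_L, r_0²) ∼ C₁ γ_Z(L), cov(r_0, r_L) ∼ C₂ γ_Z(L), cov(r_0², r_L²) ∼ C₃ γ_Z(L) with C₁² = C₂ C₃, and γ_Z(L) ∼ c L^{2d−1} · (2d+1)/(4d). -/

import Mathlib

/-!
Put `n = H m`. Bilinearity and stationarity turn the three covariances into double sums of lag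
covariances: `cov(R, RV) = ∑_{i,k<n} γ₁(i+k+1)`, `var R = ∑_{i,k<n} γ₂(k-i)` and
`var RV = ∑_{i,k<n} γ₃(k-i)`, with `γⱼ(L) ∼ Cⱼ K L^p` for some `K > 0` and `p = 2d - 1 > -1`.
Both shapes reduce to the iterated partial sums `T(n) = ∑_{k<n} ∑_{i<k} γ(i+1)`: the first
double sum is `T(2n) - 2T(n)`, the second `n γ(0) + 2T(n)`. Two applications of the discrete Karamata theorem
(`b_n ∼ A n^p ⟹ ∑_{i<n} b_i ∼ A n^{p+1}/(p+1)`) give `T(n) ∼ A n^{p+2}/((p+1)(p+2))`, so after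
normalising by `n^{p+2}` the correlation tends to `C₁ (2^{p+2} - 2) / (2 √(C₂ C₃)) = 2^{2d} - 1`.
-/

open MeasureTheory ProbabilityTheory Real Filter

/-- Covariance of two real random variables. -/
noncomputable def covar {Ω : Type*} [MeasurableSpace Ω] (μ : Measure Ω) (X Y : Ω → ℝ) : ℝ :=
  ∫ ω, X ω * Y ω ∂μ - (∫ ω, X ω ∂μ) * (∫ ω, Y ω ∂μ)

open Finset Topology Asymptotics
open scoped ENNReal

lemma tendsto_natCast_add_one_rpow_sub_rpow_div_rpow (q : ℝ) :
    Tendsto (fun n : ℕ => (((n : ℝ) + 1) ^ q - (n : ℝ) ^ q) / (n : ℝ) ^ (q - 1)) atTop (𝓝 q) := by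
  have hderiv : HasDerivAt (fun x : ℝ => x ^ q) q 1 := by
    simpa using Real.hasDerivAt_rpow_const (x := 1) (p := q) (Or.inl one_ne_zero)
  have hinv : Tendsto (fun n : ℕ => (n : ℝ)⁻¹) atTop (𝓝[>] 0) :=
    tendsto_nhdsWithin_of_tendsto_nhds_of_eventually_within _ tendsto_inv_atTop_nhds_zero_nat
      (eventually_gt_atTop 0 |>.mono fun n hn => by simpa using hn)
  refine (hderiv.tendsto_slope_zero_right.comp hinv).congr' ?_
  filter_upwards [eventually_gt_atTop 0] with n hn
  have hn : (0 : ℝ) < n := by exact_mod_cast hn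
  simp only [Function.comp_apply, inv_inv, smul_eq_mul, one_rpow]
  rw [show 1 + (n : ℝ)⁻¹ = (n + 1) / n by field_simp, div_rpow (by positivity) hn.le,
    rpow_sub_one hn.ne']
  field_simp

theorem Filter.Tendsto.sum_range_div_rpow {b : ℕ → ℝ} {p A : ℝ} (hp : -1 < p)
    (hb : Tendsto (fun n : ℕ => b n / (n : ℝ) ^ p) atTop (𝓝 A)) :
    Tendsto (fun n : ℕ => (∑ i ∈ range n, b i) / (n : ℝ) ^ (p + 1)) atTop
      (𝓝 (A / (p + 1))) := by
  set q := p + 1 with hq_def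
  have hq : 0 < q := by linarith
  -- `g` telescopes to `n ^ q` and `g i ∼ q * i ^ p`, so `b - (A / q) • g = o(g)` sums to
  -- `o(n ^ q)`.
  set g : ℕ → ℝ := fun i => ((i : ℝ) + 1) ^ q - (i : ℝ) ^ q
  have hg : ∀ i, 0 < g i := fun i =>
    sub_pos.2 (rpow_lt_rpow (by positivity) (lt_add_one _) hq)
  have hsum_g : ∀ n, ∑ i ∈ range n, g i = (n : ℝ) ^ q := fun n => by
    simpa [g, zero_rpow hq.ne'] using sum_range_sub (fun i : ℕ => (i : ℝ) ^ q) n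
  have hg_div : Tendsto (fun i : ℕ => g i / (i : ℝ) ^ p) atTop (𝓝 q) := by
    simpa [hq_def] using tendsto_natCast_add_one_rpow_sub_rpow_div_rpow q
  have hlittle : (fun i => b i - A / q * g i) =o[atTop] g := by
    rw [isLittleO_iff_tendsto fun i hi => absurd hi (hg i).ne']
    have := (hb.div hg_div hq.ne').sub_const (A / q)
    rw [sub_self] at this
    refine this.congr' ?_
    filter_upwards [eventually_gt_atTop 0] with i hi
    have : (i : ℝ) ^ p ≠ 0 := (rpow_pos_of_pos (by exact_mod_cast hi) _).ne'
    simp only [Pi.div_apply]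
    field_simp [(hg i).ne']
  have hsum := (hlittle.sum_range (fun i => (hg i).le) (by
    simpa only [hsum_g, Function.comp_def] using
      (tendsto_rpow_atTop hq).comp tendsto_natCast_atTop_atTop))
    |>.tendsto_div_nhds_zero |>.add_const (A / q)
  rw [zero_add] at hsum
  refine hsum.congr' ?_
  filter_upwards [eventually_gt_atTop 0] with n hn
  have : (n : ℝ) ^ q ≠ 0 := (rpow_pos_of_pos (by exact_mod_cast hn) _).ne'
  rw [sum_sub_distrib, ← mul_sum, hsum_g]
  field_simp
  ring

theorem Filter.Tendsto.div_mul_div {α : Type*} {l : Filter α} {f g h : α → ℝ} {a b : ℝ}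
    (hfg : Tendsto (fun x => f x / g x) l (𝓝 a)) (hgh : Tendsto (fun x => g x / h x) l (𝓝 b))
    (hb : b ≠ 0) : Tendsto (fun x => f x / h x) l (𝓝 (a * b)) := by
  refine (hfg.mul hgh).congr' ?_
  filter_upwards [hgh.eventually_ne hb] with x hx
  exact div_mul_div_cancel₀ (left_ne_zero_of_mul (by simpa [div_eq_mul_inv] using hx))

theorem Filter.Tendsto.comp_add_one_div_rpow {a : ℕ → ℝ} {p A : ℝ}
    (ha : Tendsto (fun n : ℕ => a n / (n : ℝ) ^ p) atTop (𝓝 A)) :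
    Tendsto (fun n : ℕ => a (n + 1) / (n : ℝ) ^ p) atTop (𝓝 A) := by
  have hratio : Tendsto (fun n : ℕ => (1 + (n : ℝ)⁻¹) ^ p) atTop (𝓝 1) := by
    have h := (tendsto_inv_atTop_nhds_zero_nat (𝕜 := ℝ)).const_add 1
    rw [add_zero] at h
    simpa [Function.comp_def] using
      (continuousAt_rpow_const 1 p (Or.inl one_ne_zero)).tendsto.comp h
  have := (ha.comp (tendsto_add_atTop_nat 1)).mul hratio
  rw [mul_one] at this
  refine this.congr' ?_
  filter_upwards [eventually_gt_atTop 0] with n hn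
  have hn : (0 : ℝ) < n := by exact_mod_cast hn
  rw [Function.comp_apply, show 1 + (n : ℝ)⁻¹ = (n + 1) / n by field_simp,
    div_rpow (by positivity) hn.le]
  push_cast
  field_simp

theorem Filter.Tendsto.sum_range_sum_range_div_rpow {b : ℕ → ℝ} {p A : ℝ} (hp : -1 < p)
    (hb : Tendsto (fun n : ℕ => b n / (n : ℝ) ^ p) atTop (𝓝 A)) :
    Tendsto (fun n : ℕ => (∑ k ∈ range n, ∑ i ∈ range k, b i) / (n : ℝ) ^ (p + 2)) atTop
      (𝓝 (A / ((p + 1) * (p + 2)))) := by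
  have := (hb.sum_range_div_rpow hp).sum_range_div_rpow (by linarith)
  rwa [div_div, add_assoc, one_add_one_eq_two] at this

lemma sum_range_sum_range_add_add_two_nsmul {M : Type*} [AddCommMonoid M] (b : ℕ → M) (n : ℕ) :
    ∑ i ∈ range n, ∑ k ∈ range n, b (i + k) + 2 • ∑ k ∈ range n, ∑ i ∈ range k, b i =
      ∑ k ∈ range (2 * n), ∑ i ∈ range k, b i := by
  have hrow : ∀ i, ∑ k ∈ range n, b (i + k) + ∑ j ∈ range i, b j = ∑ j ∈ range (n + i), b j :=
    fun i => by rw [add_comm, add_comm n, sum_range_add]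
  rw [two_mul, sum_range_add, two_nsmul, ← add_assoc, ← sum_add_distrib, add_comm]
  simp_rw [hrow]

lemma sum_range_sum_range_sub_of_even {M : Type*} [AddCommMonoid M] {γ : ℤ → M}
    (hγ : γ.Even) (n : ℕ) :
    ∑ i ∈ range n, ∑ k ∈ range n, γ ((k : ℤ) - i) =
      n • γ 0 + 2 • ∑ k ∈ range n, ∑ i ∈ range k, γ ((i : ℤ) + 1) := by
  induction n with
  | zero => simp
  | succ n ih =>
    rw [sum_range_succ (fun k : ℕ => ∑ i ∈ range k, γ ((i : ℤ) + 1)) n]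
    simp only [sum_range_succ' _ n, Nat.cast_add, Nat.cast_one, add_sub_add_right_eq_sub,
      sum_add_distrib, ih, Nat.cast_zero, sub_zero, zero_sub, hγ _]
    rw [two_nsmul, two_nsmul, succ_nsmul]
    abel

theorem Filter.Tendsto.sum_range_sum_range_add_div_rpow {b : ℕ → ℝ} {p A : ℝ} (hp : -1 < p)
    (hb : Tendsto (fun n : ℕ => b n / (n : ℝ) ^ p) atTop (𝓝 A)) :
    Tendsto (fun n : ℕ => (∑ i ∈ range n, ∑ k ∈ range n, b (i + k)) / (n : ℝ) ^ (p + 2)) atTop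
      (𝓝 (A * (2 ^ (p + 2) - 2) / ((p + 1) * (p + 2)))) := by
  set T : ℕ → ℝ := fun n => ∑ k ∈ range n, ∑ i ∈ range k, b i
  have hT : Tendsto (fun n : ℕ => T n / (n : ℝ) ^ (p + 2)) atTop _ :=
    hb.sum_range_sum_range_div_rpow hp
  have hT_two : Tendsto (fun n : ℕ => T (2 * n) / (n : ℝ) ^ (p + 2)) atTop
      (𝓝 (A / ((p + 1) * (p + 2)) * 2 ^ (p + 2))) := by
    refine ((hT.comp (tendsto_id.const_mul_atTop' two_pos)).mul_const _).congr fun n => ?_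
    rw [Function.comp_apply, id, Nat.cast_mul, Nat.cast_two,
      mul_rpow zero_le_two (Nat.cast_nonneg n)]
    field_simp
  convert (hT_two.sub (hT.const_mul 2)).congr fun n => ?_ using 2
  · ring
  · simp only [T, ← sum_range_sum_range_add_add_two_nsmul b n, nsmul_eq_mul, Nat.cast_two]
    ring

theorem Filter.Tendsto.sum_range_sum_range_sub_div_rpow {γ : ℤ → ℝ} (hγ : γ.Even) {p A : ℝ}
    (hp : -1 < p) (h : Tendsto (fun n : ℕ => γ n / (n : ℝ) ^ p) atTop (𝓝 A)) :
    Tendsto (fun n : ℕ => (∑ i ∈ range n, ∑ k ∈ range n, γ ((k : ℤ) - i)) / (n : ℝ) ^ (p + 2))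
      atTop (𝓝 (2 * A / ((p + 1) * (p + 2)))) := by
  have hT := (h.comp_add_one_div_rpow.sum_range_sum_range_div_rpow hp).const_mul 2
  have hdiag : Tendsto (fun n : ℕ => γ 0 * ((n : ℝ) ^ (p + 1))⁻¹) atTop (𝓝 0) := by
    simpa using ((tendsto_rpow_atTop (by linarith)).comp
      tendsto_natCast_atTop_atTop).inv_tendsto_atTop.const_mul (γ 0)
  convert (hdiag.add hT).congr' ?_ using 2
  · ring
  filter_upwards [eventually_gt_atTop 0] with n hn
  have hn : (0 : ℝ) < n := by exact_mod_cast hn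
  have hpow : (n : ℝ) ^ (p + 2) = (n : ℝ) ^ (p + 1) * n := by
    rw [← rpow_add_one hn.ne']; ring_nf
  rw [sum_range_sum_range_sub_of_even hγ, nsmul_eq_mul, nsmul_eq_mul, Nat.cast_two, hpow]
  push_cast
  field_simp

theorem tendsto_div_sqrt_mul_of_tendsto_div {α : Type*} {l : Filter α} {w N V W : α → ℝ}
    {x y z : ℝ} (hw : ∀ᶠ a in l, 0 < w a) (hN : Tendsto (fun a => N a / w a) l (𝓝 x))
    (hV : Tendsto (fun a => V a / w a) l (𝓝 y)) (hW : Tendsto (fun a => W a / w a) l (𝓝 z))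
    (hyz : 0 < y * z) :
    Tendsto (fun a => N a / √(V a * W a)) l (𝓝 (x / √(y * z))) := by
  refine (hN.div (hV.mul hW).sqrt (sqrt_pos.2 hyz).ne').congr' ?_
  filter_upwards [hw] with a ha
  rw [Pi.div_apply, div_mul_div_comm, sqrt_div' _ (mul_self_nonneg _), sqrt_mul_self ha.le]
  field_simp

lemma tendsto_div_rpow_of_tendsto_div_const_mul_rpow {f : ℕ → ℝ} {c k p : ℝ} (hck : c * k ≠ 0)
    (h : Tendsto (fun n : ℕ => f n / (c * (n : ℝ) ^ p * k)) atTop (𝓝 1)) :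
    Tendsto (fun n : ℕ => f n / (n : ℝ) ^ p) atTop (𝓝 (c * k)) := by
  refine one_mul (c * k) ▸ h.div_mul_div (tendsto_const_nhds.congr' ?_) hck
  filter_upwards [eventually_gt_atTop 0] with n hn
  have : (n : ℝ) ^ p ≠ 0 := (rpow_pos_of_pos (by exact_mod_cast hn) _).ne'
  field_simp

theorem tendsto_div_sqrt_mul_of_lag_asymptotics {γ₁ : ℕ → ℝ} {γ₂ γ₃ : ℤ → ℝ}
    (hγ₂ : γ₂.Even) (hγ₃ : γ₃.Even) {p K C₁ C₂ C₃ : ℝ} (hp : -1 < p) (hK : 0 < K)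
    (hC₁ : 0 < C₁) (hC : C₁ ^ 2 = C₂ * C₃)
    (h₁ : Tendsto (fun n : ℕ => γ₁ n / (n : ℝ) ^ p) atTop (𝓝 (C₁ * K)))
    (h₂ : Tendsto (fun n : ℕ => γ₂ n / (n : ℝ) ^ p) atTop (𝓝 (C₂ * K)))
    (h₃ : Tendsto (fun n : ℕ => γ₃ n / (n : ℝ) ^ p) atTop (𝓝 (C₃ * K))) :
    Tendsto (fun n : ℕ => (∑ i ∈ range n, ∑ k ∈ range n, γ₁ (i + k + 1)) /
        √((∑ i ∈ range n, ∑ k ∈ range n, γ₂ ((k : ℤ) - i)) *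
          ∑ i ∈ range n, ∑ k ∈ range n, γ₃ ((k : ℤ) - i)))
      atTop (𝓝 (2 ^ (p + 1) - 1)) := by
  set D := (p + 1) * (p + 2)
  have hD : 0 < D := mul_pos (by linarith) (by linarith)
  have hprod : 2 * (C₂ * K) / D * (2 * (C₃ * K) / D) = (2 * (C₁ * K) / D) ^ 2 := by
    rw [div_pow, mul_pow, mul_pow, hC, div_mul_div_comm]; ring
  have hval : C₁ * K * (2 ^ (p + 2) - 2) / D / √(2 * (C₂ * K) / D * (2 * (C₃ * K) / D)) =
      2 ^ (p + 1) - 1 := by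
    rw [hprod, sqrt_sq (by positivity), show p + 2 = p + 1 + 1 by ring,
      rpow_add_one two_ne_zero]
    field_simp
  have hN := h₁.comp_add_one_div_rpow.sum_range_sum_range_add_div_rpow hp
  have hV₂ := h₂.sum_range_sum_range_sub_div_rpow hγ₂ hp
  have hV₃ := h₃.sum_range_sum_range_sub_div_rpow hγ₃ hp
  have hpos : 0 < 2 * (C₂ * K) / D * (2 * (C₃ * K) / D) := hprod ▸ by positivity
  rw [← hval]
  exact tendsto_div_sqrt_mul_of_tendsto_div
    (eventually_gt_atTop 0 |>.mono fun n hn => rpow_pos_of_pos (Nat.cast_pos.2 hn) _)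
    hN hV₂ hV₃ hpos

lemma sum_Ioc_add_natCast {M : Type*} [AddCommMonoid M] (f : ℤ → M) (a : ℤ) (n : ℕ) :
    ∑ j ∈ Ioc a (a + n), f j = ∑ i ∈ range n, f (a + 1 + i) := by
  refine (sum_nbij' (fun i : ℕ => a + 1 + i) (fun j => (j - a - 1).toNat) ?_ ?_ ?_ ?_ ?_).symm <;>
    intros <;> simp_all
  all_goals omega

lemma sum_Ioc_sub_natCast {M : Type*} [AddCommMonoid M] (f : ℤ → M) (a : ℤ) (n : ℕ) :
    ∑ j ∈ Ioc (a - n) a, f j = ∑ i ∈ range n, f (a - i) := by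
  refine (sum_nbij' (fun i : ℕ => a - i) (fun j => (a - j).toNat) ?_ ?_ ?_ ?_ ?_).symm <;>
    intros <;> simp_all
  omega

section Covar

variable {Ω : Type*} [MeasurableSpace Ω] {μ : Measure Ω}

lemma covar_comm (X Y : Ω → ℝ) : covar μ X Y = covar μ Y X := by
  simp only [covar, mul_comm]

lemma MeasureTheory.MemLp.sq_of_four {f : Ω → ℝ} (hf : MemLp f 4 μ) :
    MemLp (fun ω => f ω ^ 2) 2 μ := by
  have h42 : (4 : ℝ≥0∞) / 2 = 2 :=
    ((ENNReal.eq_div_iff (by simp) (by simp)).2 (by norm_num)).symm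
  simpa [h42] using hf.norm_rpow_div 2

variable [IsProbabilityMeasure μ]

lemma covar_eq_covariance {X Y : Ω → ℝ} (hX : MemLp X 2 μ) (hY : MemLp Y 2 μ) :
    covar μ X Y = cov[X, Y; μ] :=
  (covariance_eq_sub hX hY).symm

lemma covar_sum_sum {ι κ : Type*} {s : Finset ι} {t : Finset κ} {X : ι → Ω → ℝ}
    {Y : κ → Ω → ℝ} (hX : ∀ i ∈ s, MemLp (X i) 2 μ) (hY : ∀ j ∈ t, MemLp (Y j) 2 μ) :
    covar μ (fun ω => ∑ i ∈ s, X i ω) (fun ω => ∑ j ∈ t, Y j ω) =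
      ∑ i ∈ s, ∑ j ∈ t, covar μ (X i) (Y j) := by
  rw [covar_eq_covariance (memLp_finsetSum s hX) (memLp_finsetSum t hY),
    covariance_fun_sum_fun_sum' hX hY]
  exact sum_congr rfl fun i hi => sum_congr rfl fun j hj =>
    (covar_eq_covariance (hX i hi) (hY j hj)).symm

end Covar

section Stationary

variable {Ω : Type*} [MeasurableSpace Ω] {μ : Measure Ω} {X Y : ℤ → Ω → ℝ}

lemma even_covar_lag
    (hX : ∀ s a b : ℤ, covar μ (X (a + s)) (X (b + s)) = covar μ (X a) (X b)) :
    Function.Even fun h => covar μ (X 0) (X h) := fun h => by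
  dsimp only
  rw [← hX h 0 (-h), zero_add, neg_add_cancel, covar_comm]

variable [IsProbabilityMeasure μ]

lemma covar_sum_Ioc_self
    (hX : ∀ s a b : ℤ, covar μ (X (a + s)) (X (b + s)) = covar μ (X a) (X b))
    (hX2 : ∀ j, MemLp (X j) 2 μ) (a : ℤ) (n : ℕ) :
    covar μ (fun ω => ∑ j ∈ Ioc a (a + n), X j ω) (fun ω => ∑ j ∈ Ioc a (a + n), X j ω) =
      ∑ i ∈ range n, ∑ k ∈ range n, covar μ (X 0) (X ((k : ℤ) - i)) := by
  simp_rw [sum_Ioc_add_natCast _ a n]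
  rw [covar_sum_sum (fun i _ => hX2 _) (fun k _ => hX2 _)]
  refine sum_congr rfl fun i _ => sum_congr rfl fun k _ => ?_
  rw [← hX (a + 1 + i) 0 (k - i)]
  congr 2 <;> ring

lemma covar_sum_Ioc_sum_Ioc_sub
    (hXY : ∀ s a b : ℤ, covar μ (X (a + s)) (Y (b + s)) = covar μ (X a) (Y b))
    (hX2 : ∀ j, MemLp (X j) 2 μ) (hY2 : ∀ j, MemLp (Y j) 2 μ) (a : ℤ) (n : ℕ) :
    covar μ (fun ω => ∑ j ∈ Ioc a (a + n), X j ω) (fun ω => ∑ j ∈ Ioc (a - n) a, Y j ω) =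
      ∑ i ∈ range n, ∑ k ∈ range n, covar μ (X ((i + k + 1 : ℕ) : ℤ)) (Y 0) := by
  simp_rw [sum_Ioc_add_natCast _ a n, sum_Ioc_sub_natCast _ a n]
  rw [covar_sum_sum (fun i _ => hX2 _) (fun k _ => hY2 _)]
  refine sum_congr rfl fun i _ => sum_congr rfl fun k _ => ?_
  rw [← hXY (a - k) _ 0]
  congr 2 <;> push_cast <;> ring

end Stationary

theorem long_run_correlation_limit_general
    {Ω : Type*} [MeasurableSpace Ω] (μ : Measure Ω) [IsProbabilityMeasure μ]
    (r : ℤ → Ω → ℝ) (d c : ℝ) (hd1 : 0 < d) (hc : 0 < c)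
    (m : ℕ) (hm : 0 < m)
    (hL4 : ∀ t, MemLp (r t) 4 μ)
    -- stationarity of the second-order structure:
    (hstat1 : ∀ s a b : ℤ, covar μ (r (a+s)) (r (b+s)) = covar μ (r a) (r b))
    (hstat2 : ∀ s a b : ℤ, covar μ (fun ω => (r (a+s) ω)^2) (fun ω => (r (b+s) ω)^2)
      = covar μ (fun ω => (r a ω)^2) (fun ω => (r b ω)^2))
    (hstat3 : ∀ s a b : ℤ, covar μ (r (a+s)) (fun ω => (r (b+s) ω)^2)
      = covar μ (r a) (fun ω => (r b ω)^2))
    (γZ : ℕ → ℝ) (C₁ C₂ C₃ : ℝ) (hCsq : C₁^2 = C₂ * C₃)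
    (hC1 : 0 < C₁)
    (h1 : Tendsto (fun L : ℕ =>
      covar μ (r L) (fun ω => (r 0 ω)^2) / γZ L) atTop (nhds C₁))
    (h2 : Tendsto (fun L : ℕ => covar μ (r 0) (r L) / γZ L) atTop (nhds C₂))
    (h3 : Tendsto (fun L : ℕ =>
      covar μ (fun ω => (r 0 ω)^2) (fun ω => (r L ω)^2) / γZ L) atTop (nhds C₃))
    (hγZ : Tendsto (fun L : ℕ =>
      γZ L / (c * (L : ℝ) ^ (2*d - 1) * ((2*d+1)/(4*d)))) atTop (nhds 1)) :
    ∀ t : ℤ, Tendsto (fun H : ℕ =>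
        covar μ (fun ω => ∑ j ∈ Finset.Ioc (t * (m : ℤ)) ((t + (H : ℤ)) * (m : ℤ)), r j ω)
                (fun ω => ∑ j ∈ Finset.Ioc ((t - (H : ℤ)) * (m : ℤ)) (t * (m : ℤ)), (r j ω)^2)
          / Real.sqrt
              ((covar μ
                  (fun ω => ∑ j ∈ Finset.Ioc (t * (m : ℤ)) ((t + (H : ℤ)) * (m : ℤ)), r j ω)
                  (fun ω => ∑ j ∈ Finset.Ioc (t * (m : ℤ)) ((t + (H : ℤ)) * (m : ℤ)), r j ω))
                * (covar μ
                    (fun ω => ∑ j ∈ Finset.Ioc ((t - (H : ℤ)) * (m : ℤ)) (t * (m : ℤ)), (r j ω)^2)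
                    (fun ω => ∑ j ∈ Finset.Ioc ((t - (H : ℤ)) * (m : ℤ)) (t * (m : ℤ)), (r j ω)^2))))
      atTop (nhds ((2 : ℝ) ^ (2*d) - 1)) := by
  intro t
  have hK : 0 < c * ((2 * d + 1) / (4 * d)) := by positivity
  have hγ := tendsto_div_rpow_of_tendsto_div_const_mul_rpow hK.ne' hγZ
  have hr2 : ∀ j, MemLp (r j) 2 μ := fun j => (hL4 j).mono_exponent (by norm_num)
  have hsq2 : ∀ j, MemLp (fun ω => r j ω ^ 2) 2 μ := fun j => (hL4 j).sq_of_four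
  have hlim := (tendsto_div_sqrt_mul_of_lag_asymptotics (even_covar_lag hstat1)
    (even_covar_lag (X := fun j ω => r j ω ^ 2) hstat2) (by linarith) hK hC1 hCsq
    (h1.div_mul_div hγ hK.ne') (h2.div_mul_div hγ hK.ne') (h3.div_mul_div hγ hK.ne')).comp
    (tendsto_atTop_mono (fun H => Nat.le_mul_of_pos_right H hm) tendsto_id)
  rw [sub_add_cancel] at hlim
  refine hlim.congr fun H => ?_
  have hup : (t + H) * (m : ℤ) = t * m + ↑(H * m) := by push_cast; ring
  have hdown : (t - H) * (m : ℤ) = t * m - ↑(H * m) := by push_cast; ring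
  have hRV := covar_sum_Ioc_self (X := fun j ω => r j ω ^ 2) hstat2 hsq2
    (t * m - ↑(H * m)) (H * m)
  rw [sub_add_cancel] at hRV
  rw [Function.comp_apply, hup, hdown, covar_sum_Ioc_self hstat1 hr2, hRV,
    covar_sum_Ioc_sum_Ioc_sub hstat3 hr2 hsq2]

/-- With `d > 0`, `corr(R_{t,t+H}, RV_{t-H,t}) → 2^{2d} - 1` as `H → ∞`,
where `R_{t,t+H} = Σ_{j=tm+1}^{(t+H)m} r_j` and `RV_{t-H,t} = Σ_{j=(t-H)m+1}^{tm} r_j²`,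
provided `cov(r_L, r_0²) ∼ C₁ γ_Z(L)`, `cov(r_0, r_L) ∼ C₂ γ_Z(L)`,
`cov(r_0², r_L²) ∼ C₃ γ_Z(L)` with `C₁² = C₂ C₃`, and
`γ_Z(L) ∼ c L^{2d-1} (2d+1)/(4d)`. -/
theorem long_run_correlation_limit
    {Ω : Type*} [MeasurableSpace Ω] (μ : Measure Ω) [IsProbabilityMeasure μ]
    (r : ℤ → Ω → ℝ) (d c : ℝ) (hd1 : 0 < d) (hd2 : d < 1/2) (hc : 0 < c)
    (m : ℕ) (hm : 0 < m)
    (hL4 : ∀ t, MemLp (r t) 4 μ)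
    -- stationarity of the second-order structure:
    (hstat1 : ∀ s a b : ℤ, covar μ (r (a+s)) (r (b+s)) = covar μ (r a) (r b))
    (hstat2 : ∀ s a b : ℤ, covar μ (fun ω => (r (a+s) ω)^2) (fun ω => (r (b+s) ω)^2)
      = covar μ (fun ω => (r a ω)^2) (fun ω => (r b ω)^2))
    (hstat3 : ∀ s a b : ℤ, covar μ (r (a+s)) (fun ω => (r (b+s) ω)^2)
      = covar μ (r a) (fun ω => (r b ω)^2))
    (γZ : ℕ → ℝ) (C₁ C₂ C₃ : ℝ) (hCsq : C₁^2 = C₂ * C₃)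
    (hC1 : 0 < C₁) (hC2 : 0 < C₂) (hC3 : 0 < C₃)
    (h1 : Tendsto (fun L : ℕ =>
      covar μ (r L) (fun ω => (r 0 ω)^2) / γZ L) atTop (nhds C₁))
    (h2 : Tendsto (fun L : ℕ => covar μ (r 0) (r L) / γZ L) atTop (nhds C₂))
    (h3 : Tendsto (fun L : ℕ =>
      covar μ (fun ω => (r 0 ω)^2) (fun ω => (r L ω)^2) / γZ L) atTop (nhds C₃))
    (hγZ : Tendsto (fun L : ℕ =>
      γZ L / (c * (L : ℝ) ^ (2*d - 1) * ((2*d+1)/(4*d)))) atTop (nhds 1)) :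
    ∀ t : ℤ, Tendsto (fun H : ℕ =>
        covar μ (fun ω => ∑ j ∈ Finset.Ioc (t * (m : ℤ)) ((t + (H : ℤ)) * (m : ℤ)), r j ω)
                (fun ω => ∑ j ∈ Finset.Ioc ((t - (H : ℤ)) * (m : ℤ)) (t * (m : ℤ)), (r j ω)^2)
          / Real.sqrt
              ((covar μ
                  (fun ω => ∑ j ∈ Finset.Ioc (t * (m : ℤ)) ((t + (H : ℤ)) * (m : ℤ)), r j ω)
                  (fun ω => ∑ j ∈ Finset.Ioc (t * (m : ℤ)) ((t + (H : ℤ)) * (m : ℤ)), r j ω))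
                * (covar μ
                    (fun ω => ∑ j ∈ Finset.Ioc ((t - (H : ℤ)) * (m : ℤ)) (t * (m : ℤ)), (r j ω)^2)
                    (fun ω => ∑ j ∈ Finset.Ioc ((t - (H : ℤ)) * (m : ℤ)) (t * (m : ℤ)), (r j ω)^2))))
      atTop (nhds ((2 : ℝ) ^ (2*d) - 1)) :=
  long_run_correlation_limit_general μ r d c hd1 hc m hm hL4 hstat1 hstat2 hstat3 γZ C₁ C₂ C₃ hCsq
    hC1 h1 h2 h3 hγZ
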